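/- Let n and d be positive integers and let I ⊆ V be a homogeneous B_Y-saturated ideal. Then Υ(I) is a B_X-saturated ideal of S. -/

import Mathlib

/-!
Common setup, following the paper "On the abundance of minimal border rank symmetric
tensors verifying Comon's conjecture".

* `S = ℂ[α_{i,j} : 1 ≤ i ≤ d, 1 ≤ j ≤ n]` is modeled as `MvPolynomial (Fin d × Fin n) ℂ`,
  with the `ℤ^d`-grading in which `deg α_{i,j} = e_i`; `Scomp n d u` is the
  multidegree-`u` component (`u : Fin d → ℕ`).
* `V = ℂ[β_1,…,β_n]` is modeled as `MvPolynomial (Fin n) ℂ` with its standard grading;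
  `Vcomp n N` is the degree-`N` component.
* The graded duals `T` and `P` are modeled by the same polynomial rings, with `S`
  (resp. `V`) acting by differentiation (`apolar`); `ann F` is the apolar
  (annihilator) ideal of `F`.
* A tensor `F ∈ (ℂ^n)^{⊗d}` is an element of the multidegree-`(1,…,1)` component
  `Scomp n d (fun _ => 1)` (a multilinear form in the `x_{i,j}`).
-/

open MvPolynomial Submodule Module

noncomputable section

namespace BorderComon

/-- the multidegree-`u` graded component of `S`. -/
def Scomp (n d : ℕ) (u : Fin d → ℕ) : Submodule ℂ (MvPolynomial (Fin d × Fin n) ℂ) :=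
  weightedHomogeneousSubmodule ℂ (fun p : Fin d × Fin n => Pi.single p.1 1) u

/-- the degree-`N` graded component of `V`. -/
def Vcomp (n : ℕ) (N : ℕ) : Submodule ℂ (MvPolynomial (Fin n) ℂ) :=
  homogeneousSubmodule (Fin n) ℂ N

/-- the diagonal ring map `π : S → V`, `α_{i,j} ↦ β_j`. -/
def piAlg (n d : ℕ) : MvPolynomial (Fin d × Fin n) ℂ →ₐ[ℂ] MvPolynomial (Fin n) ℂ :=
  aeval (fun p : Fin d × Fin n => X p.2)

/-- `π` as a `ℂ`-linear map. -/
def piL (n d : ℕ) : MvPolynomial (Fin d × Fin n) ℂ →ₗ[ℂ] MvPolynomial (Fin n) ℂ :=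
  (piAlg n d).toLinearMap

/-- the ring map `ρ : S → V`, `α_{1,j} ↦ β_j` and `α_{i,j} ↦ 0` for `i ≥ 2`
(rows are `0`-indexed, so the first row is row `0`). -/
def rho (n d : ℕ) : MvPolynomial (Fin d × Fin n) ℂ →ₐ[ℂ] MvPolynomial (Fin n) ℂ :=
  aeval (fun p : Fin d × Fin n => if (p.1 : ℕ) = 0 then X p.2 else 0)

/-- the result of differentiating `F` by the monomial `X^a`:
`∂^a X^b = (∏_i b_i!/(b_i-a_i)!) X^{b-a}` (and `= 0` unless `a ≤ b`, which is
automatic since the descending factorial vanishes there). -/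
def diffMon {σ : Type*} (a : σ →₀ ℕ) (F : MvPolynomial σ ℂ) : MvPolynomial σ ℂ :=
  ∑ b ∈ F.support, (F.coeff b * ∏ i ∈ a.support, ((b i).descFactorial (a i) : ℂ)) •
    monomial (b - a) (1 : ℂ)

/-- the apolarity action: `apolar F ψ = ψ ∘ F` is the result of letting `ψ` act on `F`
by differentiation, linearly in `ψ`. -/
def apolar {σ : Type*} (F : MvPolynomial σ ℂ) : MvPolynomial σ ℂ →ₗ[ℂ] MvPolynomial σ ℂ :=
  Finsupp.lsum ℂ (fun a : σ →₀ ℕ => LinearMap.toSpanSingleton ℂ _ (diffMon a F)) ∘ₗ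
    (AddMonoidAlgebra.coeffLinearEquiv ℂ : AddMonoidAlgebra ℂ (σ →₀ ℕ) ≃ₗ[ℂ] _).toLinearMap

/-- the apolar (annihilator) ideal `Ann(F) = {ψ : ψ ∘ F = 0}`, as a subspace. -/
def ann {σ : Type*} (F : MvPolynomial σ ℂ) : Submodule ℂ (MvPolynomial σ ℂ) :=
  LinearMap.ker (apolar F)

/-- the ideal `I_R ⊆ S` generated by the `2×2` minors
`α_{i,j} α_{k,ℓ} − α_{i,ℓ} α_{k,j}`, `i < k`, `j < ℓ`. -/
def IR (n d : ℕ) : Ideal (MvPolynomial (Fin d × Fin n) ℂ) :=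
  Ideal.span {q | ∃ i k : Fin d, ∃ j l : Fin n, i < k ∧ j < l ∧
    q = X (i, j) * X (k, l) - X (i, l) * X (k, j)}

/-- `J ⊆ S` is a (multigraded) homogeneous ideal: it is the sum of its
multigraded components. -/
def IsHomogS (n d : ℕ) (J : Ideal (MvPolynomial (Fin d × Fin n) ℂ)) : Prop :=
  Submodule.restrictScalars ℂ J = ⨆ u : Fin d → ℕ, (Submodule.restrictScalars ℂ J ⊓ Scomp n d u)

/-- `I ⊆ V` is a homogeneous ideal: it is the sum of its graded components. -/
def IsHomogV (n : ℕ) (I : Ideal (MvPolynomial (Fin n) ℂ)) : Prop :=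
  Submodule.restrictScalars ℂ I = ⨆ N : ℕ, (Submodule.restrictScalars ℂ I ⊓ Vcomp n N)

/-- the exponent redistribution underlying `ψ_u`: in the sorted list
`i_1 ≤ ⋯ ≤ i_N` of the indices of the monomial `β^γ` (value `j` occurring `γ j`
times, `N = |γ|`), row `i` receives the block of positions
`[∑_{i'<i} u i', ∑_{i'≤i} u i')`, while value `j` occupies positions
`[∑_{j'<j} γ j', ∑_{j'≤j} γ j')`; hence the exponent of `α_{i,j}` is the size of
the intersection of these two intervals. -/
def distrib (n d : ℕ) (u : Fin d → ℕ) (γ : Fin n →₀ ℕ) : (Fin d × Fin n) →₀ ℕ :=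
  Finsupp.equivFunOnFinite.symm fun p : Fin d × Fin n =>
    min (∑ i ∈ Finset.univ.filter fun i : Fin d => (i : ℕ) ≤ (p.1 : ℕ), u i)
        (∑ j ∈ Finset.univ.filter fun j : Fin n => (j : ℕ) ≤ (p.2 : ℕ), γ j)
    - max (∑ i ∈ Finset.univ.filter fun i : Fin d => (i : ℕ) < (p.1 : ℕ), u i)
          (∑ j ∈ Finset.univ.filter fun j : Fin n => (j : ℕ) < (p.2 : ℕ), γ j)

/-- the linear map `ψ_u : V → S` sending a monomial `β_{i_1} β_{i_2} ⋯ β_{i_N}`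
with `i_1 ≤ i_2 ≤ ⋯ ≤ i_N` to
`(α_{1,i_1} ⋯ α_{1,i_{u_1}}) (α_{2,i_{u_1+1}} ⋯ α_{2,i_{u_1+u_2}}) ⋯`.
(Its restriction to `Vcomp n (∑ i, u i)` is the map `ψ_u : V_{|u|} → S_u` of the
paper.) -/
def psi (n d : ℕ) (u : Fin d → ℕ) :
    MvPolynomial (Fin n) ℂ →ₗ[ℂ] MvPolynomial (Fin d × Fin n) ℂ :=
  AddMonoidAlgebra.mapDomainLinearMap ℂ ℂ (distrib n d u)

/-- `Υ(I) = I_R + ∑_{u} ψ_u(I_{|u|}) ⊆ S`. -/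
def Upsilon (n d : ℕ) (I : Ideal (MvPolynomial (Fin n) ℂ)) :
    Submodule ℂ (MvPolynomial (Fin d × Fin n) ℂ) :=
  restrictScalars ℂ (IR n d) ⊔
    ⨆ u : Fin d → ℕ, Submodule.map (psi n d u) (restrictScalars ℂ I ⊓ Vcomp n (∑ i, u i))

/-- the irrelevant ideal `B_X = ∏_{i=1}^d (α_{i,1},…,α_{i,n}) ⊆ S`. -/
def BX (n d : ℕ) : Ideal (MvPolynomial (Fin d × Fin n) ℂ) :=
  ∏ i : Fin d, Ideal.span (Set.range fun j : Fin n => X (i, j))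

/-- the irrelevant ideal `B_Y = (β_1,…,β_n) ⊆ V`. -/
def BY (n : ℕ) : Ideal (MvPolynomial (Fin n) ℂ) :=
  Ideal.span (Set.range X)

/-- `Σ(J) = ⊕_{a ≥ 0} ⊕_{s ∈ ℰ} π(J_{a𝟏+s}) ⊆ V`, where
`ℰ = {0, e_1, e_1+e_2, …, e_1+⋯+e_{d-1}}` (the element `s` with `m` ones is
`fun i => if i < m then 1 else 0`). -/
def SigmaMap (n d : ℕ) (J : Ideal (MvPolynomial (Fin d × Fin n) ℂ)) :
    Submodule ℂ (MvPolynomial (Fin n) ℂ) :=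
  ⨆ a : ℕ, ⨆ m : Fin d, Submodule.map (piL n d)
    (restrictScalars ℂ J ⊓ Scomp n d (fun i => a + if (i : ℕ) < (m : ℕ) then 1 else 0))

/-- the set of tensors of rank at most `r`: sums of `r` decomposable tensors
`v_1 ⊗ ⋯ ⊗ v_d = ∏_i (∑_j v_i(j) x_{i,j})`. -/
def rankLE (n d r : ℕ) : Set (MvPolynomial (Fin d × Fin n) ℂ) :=
  {F | ∃ v : Fin r → Fin d → Fin n → ℂ,
    F = ∑ s : Fin r, ∏ i : Fin d, ∑ j : Fin n, C (v s i j) * X (i, j)}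

/-- `F` has border rank at most `r`: coefficientwise (finitely many coefficients are
involved), `F` lies in the closure of the set of tensors of rank at most `r`. -/
def brkLE (n d : ℕ) (F : MvPolynomial (Fin d × Fin n) ℂ) (r : ℕ) : Prop :=
  (fun m => coeff m F) ∈ closure ((fun G => fun m => coeff m G) '' rankLE n d r)

/-- the border rank of a tensor. -/
def brk (n d : ℕ) (F : MvPolynomial (Fin d × Fin n) ℂ) : ℕ :=
  sInf {r | brkLE n d F r}

/-- polynomials that are sums of `r` `d`-th powers of linear forms. -/
def srankLE (n d r : ℕ) : Set (MvPolynomial (Fin n) ℂ) :=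
  {p | ∃ c : Fin r → Fin n → ℂ, p = ∑ s : Fin r, (∑ j : Fin n, C (c s j) * X j) ^ d}

/-- `p` has symmetric border rank at most `r`. -/
def sbrkLE (n d : ℕ) (p : MvPolynomial (Fin n) ℂ) (r : ℕ) : Prop :=
  (fun m => coeff m p) ∈ closure ((fun q => fun m => coeff m q) '' srankLE n d r)

/-- the symmetric border rank of a degree-`d` form. -/
def sbrk (n d : ℕ) (p : MvPolynomial (Fin n) ℂ) : ℕ :=
  sInf {r | sbrkLE n d p r}

/-- `F` is a symmetric tensor: invariant under the permutations of the `d` factors. -/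
def IsSymm (n d : ℕ) (F : MvPolynomial (Fin d × Fin n) ℂ) : Prop :=
  ∀ τ : Equiv.Perm (Fin d), rename (Prod.map τ id) F = F

/-- the degree-`d` polynomial `p_F` corresponding to a symmetric tensor `F`, obtained
by identifying all the rows of variables (`x_{i,j} ↦ y_j`); `F` is the polarization
of `p_F`. -/
def pF (n d : ℕ) (F : MvPolynomial (Fin d × Fin n) ℂ) : MvPolynomial (Fin n) ℂ :=
  rename Prod.snd F

/-- `F` is concise: the contraction `(ℂ^n)^* → (ℂ^n)^{⊗(d-1)}` of the first tensor
factor, `w ↦ F(x_{1,j} := w_j)`, is injective. -/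
def Concise (n d : ℕ) (F : MvPolynomial (Fin d × Fin n) ℂ) : Prop :=
  Function.Injective fun w : Fin n → ℂ =>
    aeval (fun p : Fin d × Fin n => if (p.1 : ℕ) = 0 then C (w p.2) else X p) F

/-- the ideal `∑_{0<u<𝟏} S·Ann(F)_u` generated by the components `Ann(F)_u`,
`0 < u < 𝟏` (componentwise). -/
def midIdeal (n d : ℕ) (F : MvPolynomial (Fin d × Fin n) ℂ) :
    Ideal (MvPolynomial (Fin d × Fin n) ℂ) :=
  Ideal.span (⋃ u ∈ {u : Fin d → ℕ | 0 < u ∧ u < fun _ => 1},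
    ((ann F ⊓ Scomp n d u : Submodule ℂ (MvPolynomial (Fin d × Fin n) ℂ)) :
      Set (MvPolynomial (Fin d × Fin n) ℂ)))

/-- `F` is a *sharp* tensor:
(1) `Ann(F)` has exactly `n-1` minimal generators of multidegree `𝟏`;
(2) `dim (S/Ann F)_u = n` for all `0 < u < 𝟏`;
(3) `dim (S/(Ann(F)_{e_i+e_j}))_{s e_i + e_j} = n` for all `i ≠ j`, `1 ≤ s ≤ d-1`. -/
def Sharp (n d : ℕ) (F : MvPolynomial (Fin d × Fin n) ℂ) : Prop :=
  (finrank ℂ (ann F ⊓ Scomp n d fun _ => 1 :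
        Submodule ℂ (MvPolynomial (Fin d × Fin n) ℂ)) -
      finrank ℂ (restrictScalars ℂ (midIdeal n d F) ⊓ Scomp n d fun _ => 1 :
        Submodule ℂ (MvPolynomial (Fin d × Fin n) ℂ)) = n - 1) ∧
  (∀ u : Fin d → ℕ, 0 < u → u < (fun _ => 1) →
    finrank ℂ (Scomp n d u ⧸ Submodule.comap (Scomp n d u).subtype (ann F)) = n) ∧
  (∀ i j : Fin d, i ≠ j → ∀ s : ℕ, 1 ≤ s → s ≤ d - 1 →
    finrank ℂ (Scomp n d (Pi.single i s + Pi.single j 1) ⧸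
      Submodule.comap (Scomp n d (Pi.single i s + Pi.single j 1)).subtype
        (restrictScalars ℂ (Ideal.span
          ((ann F ⊓ Scomp n d (Pi.single i 1 + Pi.single j 1) :
            Submodule ℂ (MvPolynomial (Fin d × Fin n) ℂ)) :
            Set (MvPolynomial (Fin d × Fin n) ℂ))))) = n)

/-!
The map `π : S → V`, `α_{i,j} ↦ β_j`, kills `I_R`, and `π ∘ ψ_u` is the identity on `V_{|u|}`.
Conversely `ψ_u ∘ π` is the identity on `S_u` modulo `I_R`: the monomials of `S_u` with a given
image under `π` are exactly those with fixed row and column margins, and any two of them are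
congruent modulo the `2 × 2` minors (move units between entries one swap at a time). Hence a
multihomogeneous `F` lies in `Υ(I)` iff `π F ∈ I`, i.e. `Υ(I)` is the homogeneous core of
`π⁻¹(I)`, which is an ideal. For saturation, the products `∏ᵢ α_{i, jᵢ}` lie in `B_X`, have
multidegree `𝟏` and map to the monomials of degree `d` in `V`; so if `f B_X ⊆ Υ(I)`, each
`π(f_v)` is carried into `I` by all monomials of degree `d`, and `d` applications of the
`B_Y`-saturation of `I` give `π(f_v) ∈ I`.
-/

theorem _root_.Ideal.mem_homogeneousCore_iff {ι σ A : Type*} [DecidableEq ι] [AddMonoid ι]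
    [Semiring A] [SetLike σ A] [AddSubmonoidClass σ A] (𝒜 : ι → σ) [GradedRing 𝒜]
    (J : Ideal A) {x : A} :
    x ∈ (J.homogeneousCore 𝒜).toIdeal ↔ ∀ i, (DirectSum.decompose 𝒜 x i : A) ∈ J := by
  classical
  refine ⟨fun hx i => Ideal.toIdeal_homogeneousCore_le 𝒜 J
    ((J.homogeneousCore 𝒜).isHomogeneous i hx), fun hx => ?_⟩
  rw [← DirectSum.sum_support_decompose 𝒜 x]
  exact sum_mem fun i _ =>
    Ideal.mem_homogeneousCore_of_homogeneous_of_mem ⟨i, SetLike.coe_mem _⟩ (hx i)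

theorem _root_.Ideal.mem_of_forall_mul_prod_mem {R ι : Type*} [CommSemiring R] {I : Ideal R}
    {v : ι → R} (hsat : ∀ f, (∀ b ∈ Ideal.span (Set.range v), f * b ∈ I) → f ∈ I) :
    ∀ (k : ℕ) {g : R}, (∀ x : Fin k → ι, g * ∏ i, v (x i) ∈ I) → g ∈ I
  | 0, g, hg => by simpa using hg Fin.elim0
  | k + 1, g, hg => by
    refine Ideal.mem_of_forall_mul_prod_mem hsat k fun x => hsat _ fun b hb => ?_
    have hspan : Ideal.span (Set.range v) ≤ I.colon {g * ∏ i, v (x i)} := by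
      rw [Ideal.span_le]
      rintro _ ⟨j, rfl⟩
      rw [SetLike.mem_coe, Submodule.mem_colon_singleton, smul_eq_mul]
      simpa [Fin.prod_univ_succ, mul_comm, mul_left_comm, mul_assoc] using hg (Fin.cons j x)
    simpa [Submodule.mem_colon_singleton, mul_comm] using hspan hb

theorem _root_.Finsupp.exists_eq_add_single {σ : Type*} {b : σ →₀ ℕ} {p : σ} (hp : b p ≠ 0) :
    ∃ c, b = c + Finsupp.single p 1 :=
  ⟨b - Finsupp.single p 1,
    (tsub_add_cancel_of_le (Finsupp.single_le_iff.2 (Nat.one_le_iff_ne_zero.2 hp))).symm⟩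

theorem sum_min_sub_max_eq {k : ℕ} {A : ℕ → ℕ} (hA : Monotone A) (h0 : A 0 = 0) {a a' : ℕ}
    (ha : a ≤ a') (ha' : a' ≤ A k) :
    ∑ t : Fin k, (min a' (A (t + 1)) - max a (A t)) = a' - a := by
  -- the `t`-th term is the increment of `A` clamped to `[a, a']`
  have hG : Monotone fun t => max a (min a' (A t)) := fun s t hst => by
    have := hA hst; dsimp only; omega
  have hstep : ∀ t : ℕ, min a' (A (t + 1)) - max a (A t) =
      max a (min a' (A (t + 1))) - max a (min a' (A t)) := fun t => by
    have := hA t.le_succ; omega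
  rw [Fin.sum_univ_eq_sum_range (fun t => min a' (A (t + 1)) - max a (A t)),
    Finset.sum_congr rfl fun t _ => hstep t, Finset.sum_range_tsub hG, h0]
  omega

def partialSum {k : ℕ} (u : Fin k → ℕ) (t : ℕ) : ℕ :=
  ∑ i ∈ Finset.univ.filter fun i : Fin k => (i : ℕ) < t, u i

section PartialSum

variable {k : ℕ} (u : Fin k → ℕ)

theorem partialSum_mono : Monotone (partialSum u) := fun s t hst =>
  Finset.sum_le_sum_of_subset fun i hi => by
    simp only [Finset.mem_filter, Finset.mem_univ, true_and] at hi ⊢; omega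

theorem partialSum_zero : partialSum u 0 = 0 := by simp [partialSum]

theorem partialSum_of_le {t : ℕ} (ht : k ≤ t) : partialSum u t = ∑ i, u i := by
  rw [partialSum, Finset.filter_true_of_mem fun i _ => i.isLt.trans_le ht]

theorem partialSum_succ (i : Fin k) : partialSum u (i + 1) = partialSum u i + u i := by
  have h : (Finset.univ.filter fun j : Fin k => (j : ℕ) < i + 1) =
      insert i (Finset.univ.filter fun j : Fin k => (j : ℕ) < i) := by
    ext j
    simp [Fin.ext_iff]
    omega
  rw [partialSum, partialSum, h, Finset.sum_insert (by simp), add_comm]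

end PartialSum

abbrev rowWeight (n d : ℕ) : Fin d × Fin n → Fin d → ℕ := fun p => Pi.single p.1 1

instance gradedAlgebra_Scomp (n d : ℕ) : GradedAlgebra (Scomp n d) :=
  weightedGradedAlgebra ℂ (rowWeight n d)

section Development

variable {n d : ℕ}

theorem weight_rowWeight_apply (b : Fin d × Fin n →₀ ℕ) (i : Fin d) :
    Finsupp.weight (rowWeight n d) b i = ∑ j, b (i, j) := by
  induction b using Finsupp.induction_linear with
  | zero => simp
  | add f g hf hg => simp [hf, hg, Finset.sum_add_distrib]
  | single p m =>
    obtain ⟨i', j'⟩ := p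
    by_cases h : i' = i <;>
      simp [Finsupp.weight_apply, Finsupp.sum_single_index, Finsupp.single_apply, h]

theorem mapDomain_snd_apply (b : Fin d × Fin n →₀ ℕ) (j : Fin n) :
    Finsupp.mapDomain Prod.snd b j = ∑ i, b (i, j) := by
  induction b using Finsupp.induction_linear with
  | zero => simp
  | add f g hf hg => simp [Finsupp.mapDomain_add, hf, hg, Finset.sum_add_distrib]
  | single p m =>
    obtain ⟨i', j'⟩ := p
    by_cases h : j' = j <;> simp [Finsupp.mapDomain_single, Finsupp.single_apply, h]

theorem degree_eq_sum_weight_rowWeight (b : Fin d × Fin n →₀ ℕ) :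
    b.degree = ∑ i, Finsupp.weight (rowWeight n d) b i := by
  simp only [Finsupp.degree_eq_sum, weight_rowWeight_apply, Fintype.sum_prod_type]

theorem distrib_apply (u : Fin d → ℕ) (γ : Fin n →₀ ℕ) (i : Fin d) (j : Fin n) :
    distrib n d u γ (i, j) = min (partialSum u (i + 1)) (partialSum γ (j + 1)) -
      max (partialSum u i) (partialSum γ j) := by
  have hle : ∀ {k : ℕ} (v : Fin k → ℕ) (t : ℕ),
      ∑ i ∈ Finset.univ.filter (fun i : Fin k => (i : ℕ) ≤ t), v i = partialSum v (t + 1) :=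
    fun v t => by simp only [partialSum, Nat.lt_succ_iff]
  simp only [distrib, Finsupp.coe_equivFunOnFinite_symm, hle]
  rfl

theorem weight_distrib (u : Fin d → ℕ) {γ : Fin n →₀ ℕ} (hγ : γ.degree = ∑ i, u i) :
    Finsupp.weight (rowWeight n d) (distrib n d u γ) = u := by
  ext i
  have hγn : partialSum γ n = ∑ i, u i := by
    rw [partialSum_of_le _ le_rfl, ← hγ, Finsupp.degree_eq_sum]
  have hui : partialSum u (i + 1) ≤ ∑ i, u i :=
    (partialSum_mono u i.isLt).trans (partialSum_of_le u le_rfl).le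
  simp only [weight_rowWeight_apply, distrib_apply]
  rw [sum_min_sub_max_eq (partialSum_mono γ) (partialSum_zero γ)
    (partialSum_mono u (Nat.le_succ i)) (hγn ▸ hui), partialSum_succ]
  omega

theorem mapDomain_snd_distrib (u : Fin d → ℕ) {γ : Fin n →₀ ℕ} (hγ : γ.degree = ∑ i, u i) :
    Finsupp.mapDomain Prod.snd (distrib n d u γ) = γ := by
  ext j
  have hud : partialSum u d = γ.degree := by rw [partialSum_of_le _ le_rfl, hγ]
  have hγj : partialSum γ (j + 1) ≤ γ.degree :=
    (partialSum_mono γ j.isLt).trans (by rw [partialSum_of_le _ le_rfl, Finsupp.degree_eq_sum])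
  simp only [mapDomain_snd_apply, distrib_apply, min_comm (partialSum u _),
    max_comm (partialSum u _)]
  rw [sum_min_sub_max_eq (partialSum_mono u) (partialSum_zero u)
    (partialSum_mono γ (Nat.le_succ j)) (hud ▸ hγj), partialSum_succ]
  omega

theorem X_mul_X_sub_X_mul_X_mem_IR {i k : Fin d} {j l : Fin n} (hik : i ≠ k) (hjl : j ≠ l) :
    (X (i, j) * X (k, l) - X (i, l) * X (k, j) : MvPolynomial (Fin d × Fin n) ℂ) ∈ IR n d := by
  have hgen : ∀ {i k : Fin d} {j l : Fin n}, i < k → j < l →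
      (X (i, j) * X (k, l) - X (i, l) * X (k, j) : MvPolynomial (Fin d × Fin n) ℂ) ∈ IR n d :=
    fun hik hjl => Ideal.subset_span ⟨_, _, _, _, hik, hjl, rfl⟩
  rcases hik.lt_or_gt with hik | hki <;> rcases hjl.lt_or_gt with hjl | hlj
  · exact hgen hik hjl
  · convert neg_mem (hgen hik hlj) using 1; ring
  · convert neg_mem (hgen hki hjl) using 1; ring
  · convert hgen hki hlj using 1; ring

theorem monomial_swap_sub_mem_IR (c : Fin d × Fin n →₀ ℕ) {i k : Fin d} {j l : Fin n}
    (hik : i ≠ k) (hjl : j ≠ l) :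
    (monomial (c + Finsupp.single (k, j) 1 + Finsupp.single (i, l) 1) 1 -
      monomial (c + Finsupp.single (i, j) 1 + Finsupp.single (k, l) 1) 1 :
        MvPolynomial (Fin d × Fin n) ℂ) ∈ IR n d := by
  have h : (monomial (c + Finsupp.single (k, j) 1 + Finsupp.single (i, l) 1) 1 -
      monomial (c + Finsupp.single (i, j) 1 + Finsupp.single (k, l) 1) 1 :
        MvPolynomial (Fin d × Fin n) ℂ) =
      -(monomial c 1 * (X (i, j) * X (k, l) - X (i, l) * X (k, j))) := by
    rw [← mul_neg, neg_sub]
    simp only [X, mul_sub, monomial_mul, mul_one]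
    rw [add_assoc, add_assoc, add_comm (Finsupp.single (k, j) 1)]
  rw [h]
  exact neg_mem (Ideal.mul_mem_left _ _ (X_mul_X_sub_X_mul_X_mem_IR hik hjl))

theorem exists_swap_mem_IR {b : Fin d × Fin n →₀ ℕ} {i k : Fin d} {j l : Fin n}
    (hil : b (i, l) ≠ 0) (hkj : b (k, j) ≠ 0) :
    ∃ b₁ : Fin d × Fin n →₀ ℕ, b₁ (i, j) ≠ 0 ∧
      Finsupp.weight (rowWeight n d) b₁ = Finsupp.weight (rowWeight n d) b ∧
      Finsupp.mapDomain Prod.snd b₁ = Finsupp.mapDomain Prod.snd b ∧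
      (monomial b 1 - monomial b₁ 1 : MvPolynomial (Fin d × Fin n) ℂ) ∈ IR n d := by
  by_cases hij : b (i, j) ≠ 0
  · exact ⟨b, hij, rfl, rfl, by simp⟩
  have hik : i ≠ k := by rintro rfl; exact hij hkj
  have hjl : j ≠ l := by rintro rfl; exact hij hil
  obtain ⟨b₀, rfl⟩ := Finsupp.exists_eq_add_single hil
  obtain ⟨c, rfl⟩ : ∃ c, b₀ = c + Finsupp.single (k, j) 1 :=
    Finsupp.exists_eq_add_single (by simpa [Finsupp.single_apply, hik] using hkj)
  refine ⟨c + Finsupp.single (i, j) 1 + Finsupp.single (k, l) 1, by simp, ?_, ?_,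
    monomial_swap_sub_mem_IR c hik hjl⟩
  · simp only [map_add, Finsupp.weight_single]
    abel
  · simp only [Finsupp.mapDomain_add, Finsupp.mapDomain_single]

/-- `I_R` is the toric ideal of the Segre embedding: monomials with the same row margins
(`rowWeight`-weights) and column margins (images under `Prod.snd`) are congruent modulo it. -/
theorem monomial_sub_monomial_mem_IR {b b' : Fin d × Fin n →₀ ℕ}
    (hrow : Finsupp.weight (rowWeight n d) b = Finsupp.weight (rowWeight n d) b')
    (hcol : Finsupp.mapDomain Prod.snd b = Finsupp.mapDomain Prod.snd b') :
    (monomial b 1 - monomial b' 1 : MvPolynomial (Fin d × Fin n) ℂ) ∈ IR n d := by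
  induction hN : b'.degree generalizing b b' with
  | zero =>
    obtain rfl : b' = 0 := (Finsupp.degree_eq_zero_iff b').1 hN
    obtain rfl : b = 0 := by
      ext ⟨i, j⟩
      have := congr_fun hrow i
      rw [weight_rowWeight_apply, map_zero, Pi.zero_apply] at this
      exact Finset.sum_eq_zero_iff.1 this j (Finset.mem_univ _)
    simp
  | succ N ih =>
    obtain ⟨⟨i, j⟩, hp⟩ : ∃ p, b' p ≠ 0 := by
      by_contra! h
      have : b' = 0 := by ext p; exact h p
      simp [this] at hN
    obtain ⟨l, hl⟩ : ∃ l, b (i, l) ≠ 0 := by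
      by_contra! h
      have := congr_fun hrow i
      simp only [weight_rowWeight_apply, h, Finset.sum_const_zero] at this
      exact hp (Finset.sum_eq_zero_iff.1 this.symm j (Finset.mem_univ _))
    obtain ⟨k, hk⟩ : ∃ k, b (k, j) ≠ 0 := by
      by_contra! h
      have := congr_arg (· j) hcol
      simp only [mapDomain_snd_apply, h, Finset.sum_const_zero] at this
      exact hp (Finset.sum_eq_zero_iff.1 this.symm i (Finset.mem_univ _))
    obtain ⟨b₁, hb₁, hrow₁, hcol₁, hswap⟩ := exists_swap_mem_IR hl hk
    obtain ⟨c, rfl⟩ := Finsupp.exists_eq_add_single hb₁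
    obtain ⟨c', rfl⟩ := Finsupp.exists_eq_add_single hp
    have hcc' : (monomial c 1 - monomial c' 1 : MvPolynomial (Fin d × Fin n) ℂ) ∈ IR n d := by
      refine ih ?_ ?_ ?_
      · simpa only [map_add, add_left_inj] using hrow₁.trans hrow
      · simpa only [Finsupp.mapDomain_add, add_left_inj] using hcol₁.trans hcol
      · simpa using hN
    have hX : (monomial (c + Finsupp.single (i, j) 1) 1 -
        monomial (c' + Finsupp.single (i, j) 1) 1 : MvPolynomial (Fin d × Fin n) ℂ) =
        X (i, j) * (monomial c 1 - monomial c' 1) := by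
      simp only [X, mul_sub, monomial_mul, one_mul, add_comm]
    rw [← sub_add_sub_cancel _ (monomial (c + Finsupp.single (i, j) 1) 1), hX]
    exact add_mem hswap (Ideal.mul_mem_left _ _ hcc')

theorem psi_monomial (u : Fin d → ℕ) (γ : Fin n →₀ ℕ) (c : ℂ) :
    psi n d u (monomial γ c) = monomial (distrib n d u γ) c :=
  AddMonoidAlgebra.mapDomainLinearMap_single _ _ _

theorem piAlg_eq_rename : piAlg n d = rename Prod.snd :=
  algHom_ext fun p => by simp [piAlg]

theorem piAlg_monomial (b : Fin d × Fin n →₀ ℕ) (c : ℂ) :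
    piAlg n d (monomial b c) = monomial (Finsupp.mapDomain Prod.snd b) c := by
  rw [piAlg_eq_rename, rename_monomial]

theorem degree_eq_of_mem_Vcomp {N : ℕ} {g : MvPolynomial (Fin n) ℂ} (hg : g ∈ Vcomp n N)
    {γ : Fin n →₀ ℕ} (hγ : γ ∈ g.support) : γ.degree = N := by
  rw [Finsupp.degree_eq_weight_one]
  exact hg (mem_support_iff.1 hγ)

theorem psi_mem_Scomp (u : Fin d → ℕ) {g : MvPolynomial (Fin n) ℂ}
    (hg : g ∈ Vcomp n (∑ i, u i)) : psi n d u g ∈ Scomp n d u := by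
  rw [← support_sum_monomial_coeff g, map_sum]
  refine sum_mem fun γ hγ => ?_
  rw [psi_monomial, Scomp, mem_weightedHomogeneousSubmodule]
  exact isWeightedHomogeneous_monomial _ _ _ (weight_distrib u (degree_eq_of_mem_Vcomp hg hγ))

theorem piAlg_psi (u : Fin d → ℕ) {g : MvPolynomial (Fin n) ℂ}
    (hg : g ∈ Vcomp n (∑ i, u i)) : piAlg n d (psi n d u g) = g := by
  conv_lhs => rw [← support_sum_monomial_coeff g]
  conv_rhs => rw [← support_sum_monomial_coeff g]
  rw [map_sum, map_sum]
  refine Finset.sum_congr rfl fun γ hγ => ?_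
  rw [psi_monomial, piAlg_monomial, mapDomain_snd_distrib u (degree_eq_of_mem_Vcomp hg hγ)]

theorem piAlg_mem_Vcomp (u : Fin d → ℕ) {F : MvPolynomial (Fin d × Fin n) ℂ}
    (hF : F ∈ Scomp n d u) : piAlg n d F ∈ Vcomp n (∑ i, u i) := by
  rw [← support_sum_monomial_coeff F, map_sum]
  refine sum_mem fun b hb => ?_
  rw [piAlg_monomial, Vcomp, mem_homogeneousSubmodule]
  refine isHomogeneous_monomial _ ?_
  rw [Finsupp.degree_mapDomain, degree_eq_sum_weight_rowWeight, hF (mem_support_iff.1 hb)]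

theorem sub_psi_piAlg_mem_IR (u : Fin d → ℕ) {F : MvPolynomial (Fin d × Fin n) ℂ}
    (hF : F ∈ Scomp n d u) : F - psi n d u (piAlg n d F) ∈ IR n d := by
  rw [← support_sum_monomial_coeff F, map_sum, map_sum, ← Finset.sum_sub_distrib]
  refine sum_mem fun b hb => ?_
  have hwb : Finsupp.weight (rowWeight n d) b = u := hF (mem_support_iff.1 hb)
  have hdeg : (Finsupp.mapDomain Prod.snd b).degree = ∑ i, u i := by
    rw [Finsupp.degree_mapDomain, degree_eq_sum_weight_rowWeight, hwb]
  rw [piAlg_monomial, psi_monomial, ← mul_one (coeff b F), ← smul_eq_mul, ← smul_monomial,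
    ← smul_monomial, ← smul_sub]
  refine Submodule.smul_of_tower_mem _ _ (monomial_sub_monomial_mem_IR ?_ ?_)
  · rw [hwb, weight_distrib u hdeg]
  · rw [mapDomain_snd_distrib u hdeg]

theorem IR_le_ker_piAlg : IR n d ≤ RingHom.ker (piAlg n d) := by
  rw [IR, Ideal.span_le]
  rintro _ ⟨i, k, j, l, -, -, rfl⟩
  simp only [SetLike.mem_coe, RingHom.mem_ker, map_sub, map_mul, piAlg, aeval_X]
  ring

theorem isHomogeneous_IR : (IR n d).IsHomogeneous (Scomp n d) := by
  refine Ideal.homogeneous_span _ _ ?_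
  rintro _ ⟨i, k, j, l, -, -, rfl⟩
  have hX : ∀ p : Fin d × Fin n,
      IsWeightedHomogeneous (rowWeight n d) (X p : MvPolynomial _ ℂ) (Pi.single p.1 1) :=
    fun p => isWeightedHomogeneous_X ℂ _ p
  exact ⟨Pi.single i 1 + Pi.single k 1,
    Submodule.sub_mem _ ((hX _).mul (hX _)) ((hX _).mul (hX _))⟩

theorem mem_upsilon_of_mem_Scomp (I : Ideal (MvPolynomial (Fin n) ℂ)) {u : Fin d → ℕ}
    {F : MvPolynomial (Fin d × Fin n) ℂ} (hF : F ∈ Scomp n d u) (hFI : piAlg n d F ∈ I) :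
    F ∈ Upsilon n d I := by
  rw [← sub_add_cancel F (psi n d u (piAlg n d F))]
  refine add_mem (Submodule.mem_sup_left (sub_psi_piAlg_mem_IR u hF))
    (Submodule.mem_sup_right (Submodule.mem_iSup_of_mem u ?_))
  exact Submodule.mem_map_of_mem ⟨hFI, piAlg_mem_Vcomp u hF⟩

theorem upsilon_eq_homogeneousCore (I : Ideal (MvPolynomial (Fin n) ℂ)) :
    Upsilon n d I =
      Submodule.restrictScalars ℂ ((I.comap (piAlg n d)).homogeneousCore (Scomp n d)).toIdeal := by
  refine le_antisymm (sup_le ?_ (iSup_le fun u => ?_)) fun x hx => ?_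
  · rw [← isHomogeneous_IR.toIdeal_homogeneousCore_eq_self]
    exact Ideal.homogeneousCore_mono _ (IR_le_ker_piAlg.trans fun x hx =>
      Ideal.mem_comap.2 (by rw [RingHom.mem_ker.1 hx]; exact I.zero_mem))
  · rintro _ ⟨g, ⟨hgI, hgV⟩, rfl⟩
    exact Ideal.mem_homogeneousCore_of_homogeneous_of_mem ⟨u, psi_mem_Scomp u hgV⟩
      (Ideal.mem_comap.2 (by rwa [piAlg_psi u hgV]))
  · classical
    rw [← DirectSum.sum_support_decompose (Scomp n d) x]
    exact sum_mem fun u _ => mem_upsilon_of_mem_Scomp I (SetLike.coe_mem _)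
      (Ideal.mem_comap.1 ((Ideal.mem_homogeneousCore_iff _ _).1 hx u))

theorem prod_X_mem_Scomp_one (jf : Fin d → Fin n) :
    ∏ i, (X (i, jf i) : MvPolynomial (Fin d × Fin n) ℂ) ∈ Scomp n d 1 := by
  rw [Scomp, mem_weightedHomogeneousSubmodule, ← Finset.univ_sum_single (1 : Fin d → ℕ)]
  exact IsWeightedHomogeneous.prod _ _ _ fun i _ => isWeightedHomogeneous_X ℂ _ _

theorem mem_upsilon_of_forall_mul_mem (I : Ideal (MvPolynomial (Fin n) ℂ))
    (hsat : ∀ f : MvPolynomial (Fin n) ℂ, (∀ b ∈ BY n, f * b ∈ I) → f ∈ I)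
    {f : MvPolynomial (Fin d × Fin n) ℂ} (hf : ∀ b ∈ BX n d, f * b ∈ Upsilon n d I) :
    f ∈ Upsilon n d I := by
  rw [upsilon_eq_homogeneousCore] at hf ⊢
  refine (Ideal.mem_homogeneousCore_iff _ _).2 fun v => Ideal.mem_comap.2 ?_
  refine Ideal.mem_of_forall_mul_prod_mem hsat d fun jf => ?_
  have hmBX : ∏ i, (X (i, jf i) : MvPolynomial (Fin d × Fin n) ℂ) ∈ BX n d :=
    Ideal.prod_mem_prod fun i _ => Ideal.subset_span ⟨jf i, rfl⟩
  have := Ideal.mem_comap.1 ((Ideal.mem_homogeneousCore_iff _ _).1 (hf _ hmBX) (v + 1))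
  rw [DirectSum.coe_decompose_mul_of_right_mem_of_le _ (prod_X_mem_Scomp_one jf) le_add_self,
    add_tsub_cancel_right, map_mul, map_prod] at this
  simpa [piAlg] using this

end Development

theorem stmt_7_general (n d : ℕ)
    (I : Ideal (MvPolynomial (Fin n) ℂ))
    (hsat : ∀ f : MvPolynomial (Fin n) ℂ, (∀ b ∈ BY n, f * b ∈ I) → f ∈ I) :
    (∀ s x : MvPolynomial (Fin d × Fin n) ℂ,
        x ∈ Upsilon n d I → s * x ∈ Upsilon n d I) ∧
      (∀ f : MvPolynomial (Fin d × Fin n) ℂ,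
        (∀ b ∈ BX n d, f * b ∈ Upsilon n d I) → f ∈ Upsilon n d I) := by
  refine ⟨fun s x hx => ?_, fun f hf => mem_upsilon_of_forall_mul_mem I hsat hf⟩
  rw [upsilon_eq_homogeneousCore] at hx ⊢
  exact Ideal.mul_mem_left _ s hx

/-- Proposition 4.5: if `I ⊆ V` is a homogeneous `B_Y`-saturated
ideal, then `Υ(I)` is a `B_X`-saturated ideal of `S`. -/
theorem stmt_7 (n d : ℕ) (hn : 0 < n) (hd : 0 < d)
    (I : Ideal (MvPolynomial (Fin n) ℂ)) (hhom : IsHomogV n I)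
    (hsat : ∀ f : MvPolynomial (Fin n) ℂ, (∀ b ∈ BY n, f * b ∈ I) → f ∈ I) :
    (∀ s x : MvPolynomial (Fin d × Fin n) ℂ,
        x ∈ Upsilon n d I → s * x ∈ Upsilon n d I) ∧
      (∀ f : MvPolynomial (Fin d × Fin n) ℂ,
        (∀ b ∈ BX n d, f * b ∈ Upsilon n d I) → f ∈ Upsilon n d I) :=
  stmt_7_general n d I hsat

end BorderComon
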